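/- arXiv:2105.00936 — 2 statements merged into one kernel-verified Lean document; each statement's English description precedes it below -/
import Mathlib

section
/- The subgroup W of GL(F) generated by s_0, s_1, …, s_n coincides with the set {t(μ) ∘ w : μ ∈ P_{C_n}, w ∈ W_0}, and for every g ∈ W the pair (μ, w) with μ ∈ P_{C_n}, w ∈ W_0 and g = t(μ) ∘ w is unique. In other words, W is the (internal) semidirect product t(P_{C_n}) ⋊ W_0. -/
noncomputable section

namespace CvC

/-- Ambient space `F = ℝⁿ ⊕ ℝc`. -/
abbrev F (n : ℕ) := (Fin n → ℝ) × ℝ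

/-- Bilinear form `⟨v + rc, w + sc⟩ = v ⬝ w`. -/
def bform (n : ℕ) (x y : F n) : ℝ := ∑ i, x.1 i * y.1 i

/-- The constant function `c`. -/
def cvec (n : ℕ) : F n := (0, 1)

/-- `eps n i` is the basis vector `ε_i`, for `1 ≤ i ≤ n` (1-based; junk value `0` out of range). -/
def eps (n i : ℕ) : F n :=
  if h : 1 ≤ i ∧ i ≤ n then (Pi.single (⟨i - 1, by omega⟩ : Fin n) 1, 0) else 0

lemma bform_add_left (n : ℕ) (x y z : F n) :
    bform n (x + y) z = bform n x z + bform n y z := by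
  simp [bform, add_mul, Finset.sum_add_distrib]

lemma bform_smul_left (n : ℕ) (c : ℝ) (x z : F n) :
    bform n (c • x) z = c * bform n x z := by
  simp [bform, Finset.mul_sum, mul_assoc]

lemma bform_sub_left (n : ℕ) (x y z : F n) :
    bform n (x - y) z = bform n x z - bform n y z := by
  simp [bform, sub_mul, Finset.sum_sub_distrib]

/-- Reflection `s_f(g) = g − ⟨g, f^∨⟩ f`, `f^∨ = (2/⟨f,f⟩) f`, as a linear endomorphism. -/
def reflMap (n : ℕ) (f : F n) : Module.End ℝ (F n) where
  toFun g := g - ((2 / bform n f f) * bform n g f) • f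
  map_add' x y := by
    try dsimp only
    rw [bform_add_left, mul_add, add_smul]; abel
  map_smul' c x := by
    try dsimp only
    simp only [RingHom.id_apply]
    rw [bform_smul_left, smul_sub, smul_smul, mul_left_comm]

@[simp] lemma reflMap_apply (n : ℕ) (f g : F n) :
    reflMap n f g = g - ((2 / bform n f f) * bform n g f) • f := rfl

lemma reflMap_invol (n : ℕ) (f : F n) (hf : bform n f f ≠ 0) (g : F n) :
    reflMap n f (reflMap n f g) = g := by
  simp only [reflMap_apply]
  rw [bform_sub_left, bform_smul_left, sub_sub, ← add_smul]
  have key : (2 / bform n f f) * bform n g f +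
      (2 / bform n f f) * (bform n g f - (2 / bform n f f) * bform n g f * bform n f f) = 0 := by
    field_simp
    ring
  rw [key, zero_smul, sub_zero]

/-- Translation `t(v)(f) = f − ⟨f, v⟩c`, as a linear endomorphism. -/
def tMap (n : ℕ) (v : Fin n → ℝ) : Module.End ℝ (F n) where
  toFun g := g - bform n g (v, 0) • cvec n
  map_add' x y := by
    try dsimp only
    rw [bform_add_left, add_smul]; abel
  map_smul' c x := by
    try dsimp only
    simp only [RingHom.id_apply]
    rw [bform_smul_left, smul_sub, smul_smul]

@[simp] lemma tMap_apply (n : ℕ) (v : Fin n → ℝ) (g : F n) :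
    tMap n v g = g - bform n g (v, 0) • cvec n := rfl

lemma bform_pair_add (n : ℕ) (g : F n) (v w : Fin n → ℝ) :
    bform n g (v + w, 0) = bform n g (v, 0) + bform n g (w, 0) := by
  simp [bform, mul_add, Finset.sum_add_distrib]

lemma tMap_mul (n : ℕ) (v w : Fin n → ℝ) :
    tMap n v * tMap n w = tMap n (v + w) := by
  apply LinearMap.ext; intro g
  rw [Module.End.mul_apply]
  simp only [tMap_apply]
  rw [bform_sub_left, bform_smul_left]
  have hc : bform n (cvec n) (v, 0) = 0 := by simp [bform, cvec]
  rw [hc, mul_zero, sub_zero, bform_pair_add, add_smul]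
  abel

lemma tMap_zero (n : ℕ) : tMap n 0 = 1 := by
  apply LinearMap.ext; intro g
  rw [Module.End.one_apply, tMap_apply]
  have h0 : bform n g ((0 : Fin n → ℝ), 0) = 0 := by simp [bform]
  rw [h0, zero_smul, sub_zero]

/-- Translation `t(v)` as an invertible endomorphism. -/
def tU (n : ℕ) (v : Fin n → ℝ) : (Module.End ℝ (F n))ˣ where
  val := tMap n v
  inv := tMap n (-v)
  val_inv := by rw [tMap_mul, add_neg_cancel, tMap_zero]
  inv_val := by rw [tMap_mul, neg_add_cancel, tMap_zero]

/-- Reflection `s_f` as an invertible endomorphism (junk value `1` if `⟨f,f⟩ = 0`). -/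
def reflE (n : ℕ) (f : F n) : (Module.End ℝ (F n))ˣ :=
  if hf : bform n f f ≠ 0 then
    { val := reflMap n f
      inv := reflMap n f
      val_inv := by
        apply LinearMap.ext; intro g
        rw [Module.End.mul_apply, Module.End.one_apply]
        exact reflMap_invol n f hf g
      inv_val := by
        apply LinearMap.ext; intro g
        rw [Module.End.mul_apply, Module.End.one_apply]
        exact reflMap_invol n f hf g }
  else 1

/-- The simple affine roots `a_0, a_1, …, a_n` of type `(C_n^∨, C_n)`:
`a_0 = −2ε_1 + c`, `a_j = ε_j − ε_{j+1}` for `1 ≤ j ≤ n−1`, `a_n = 2ε_n`. -/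
def aRootF (n k : ℕ) : F n :=
  if k = 0 then (-(2:ℝ)) • eps n 1 + cvec n
  else if k = n then (2:ℝ) • eps n n
  else eps n k - eps n (k + 1)

/-- The generators `s_0, s_1, …, s_n` of the extended affine Weyl group of type
`(C_n^∨, C_n)`: `s_0 = t(ε_1) ∘ s_{2ε_1}` and `s_i = s_{a_i}` for `1 ≤ i ≤ n`. -/
def sgen (n k : ℕ) : (Module.End ℝ (F n))ˣ :=
  if k = 0 then tU n (eps n 1).1 * reflE n ((2:ℝ) • eps n 1)
  else reflE n (aRootF n k)

/-- The finite Weyl group `W_0 = ⟨s_1, …, s_n⟩` of type `C_n`. -/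
def W0grp (n : ℕ) : Subgroup (Module.End ℝ (F n))ˣ :=
  Subgroup.closure (sgen n '' Set.Icc 1 n)

/-- The extended affine Weyl group `W = ⟨s_0, s_1, …, s_n⟩` of type `(C_n^∨, C_n)`. -/
def Wgrp (n : ℕ) : Subgroup (Module.End ℝ (F n))ˣ :=
  Subgroup.closure (sgen n '' Set.Icc 0 n)

/-- Product of the generators `s_k` along a list of indices. -/
def du (n : ℕ) (l : List ℕ) : (Module.End ℝ (F n))ˣ := (l.map (sgen n)).prod

/-- The weight lattice `P_{C_n} = ℤε_1 ⊕ ⋯ ⊕ ℤε_n` (as a subset of `ℝⁿ`). -/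
def PC (n : ℕ) : Set (Fin n → ℝ) := { v | ∀ i, ∃ m : ℤ, v i = m }

/-- The weight lattice `P_{B_n} = P_{C_n} + ℤ·(1/2)(ε_1 + ⋯ + ε_n)` (as a subset of `ℝⁿ`). -/
def PB (n : ℕ) : Set (Fin n → ℝ) := { v | ∃ k : ℤ, ∀ i, ∃ m : ℤ, v i = m + (k : ℝ)/2 }

/-- `O_1 = {±ε_i + rc}`. -/
def O1 (n : ℕ) : Set (F n) :=
  { x | ∃ i, 1 ≤ i ∧ i ≤ n ∧ ∃ r : ℤ,
      x = eps n i + (r : ℝ) • cvec n ∨ x = -eps n i + (r : ℝ) • cvec n }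

/-- `O_2 = {±2ε_i + 2rc}`. -/
def O2 (n : ℕ) : Set (F n) :=
  { x | ∃ i, 1 ≤ i ∧ i ≤ n ∧ ∃ r : ℤ,
      x = (2:ℝ) • eps n i + ((2*r : ℤ) : ℝ) • cvec n ∨
      x = -((2:ℝ) • eps n i) + ((2*r : ℤ) : ℝ) • cvec n }

/-- `O_3 = {±ε_i + (r + 1/2)c}`. -/
def O3 (n : ℕ) : Set (F n) :=
  { x | ∃ i, 1 ≤ i ∧ i ≤ n ∧ ∃ r : ℤ,
      x = eps n i + ((r : ℝ) + 1/2) • cvec n ∨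
      x = -eps n i + ((r : ℝ) + 1/2) • cvec n }

/-- `O_4 = {±2ε_i + (2r+1)c}`. -/
def O4 (n : ℕ) : Set (F n) :=
  { x | ∃ i, 1 ≤ i ∧ i ≤ n ∧ ∃ r : ℤ,
      x = (2:ℝ) • eps n i + ((2*r+1 : ℤ) : ℝ) • cvec n ∨
      x = -((2:ℝ) • eps n i) + ((2*r+1 : ℤ) : ℝ) • cvec n }

/-- `O_5 = {±ε_i ± ε_j + rc, i < j}`. -/
def O5 (n : ℕ) : Set (F n) :=
  { x | ∃ i j, 1 ≤ i ∧ i < j ∧ j ≤ n ∧ ∃ r : ℤ,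
      x = eps n i + eps n j + (r : ℝ) • cvec n ∨
      x = eps n i - eps n j + (r : ℝ) • cvec n ∨
      x = -eps n i + eps n j + (r : ℝ) • cvec n ∨
      x = -eps n i - eps n j + (r : ℝ) • cvec n }

/-- The five `W`-orbits `O_1, …, O_5` of the affine root system of type `(C_n^∨, C_n)`. -/
def OO (n : ℕ) : Fin 5 → Set (F n) := ![O1 n, O2 n, O3 n, O4 n, O5 n]

/-- The affine root system `S` of type `(C_n^∨, C_n)`. -/
def Sset (n : ℕ) : Set (F n) := O1 n ∪ O2 n ∪ O3 n ∪ O4 n ∪ O5 n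

/-- The set `R̃₊ = {ε_i} ∪ {2ε_i} ∪ {ε_i ± ε_j : i < j}`. -/
def Rtplus (n : ℕ) : Set (F n) :=
  { x | (∃ i, 1 ≤ i ∧ i ≤ n ∧ (x = eps n i ∨ x = (2:ℝ) • eps n i)) ∨
        (∃ i j, 1 ≤ i ∧ i < j ∧ j ≤ n ∧ (x = eps n i + eps n j ∨ x = eps n i - eps n j)) }

/-- The set of positive affine roots `S⁺`. -/
def Splus (n : ℕ) : Set (F n) :=
  { x ∈ Sset n | 0 < x.2 } ∪ (Sset n ∩ Rtplus n)

lemma sum_single_mul (n : ℕ) (j : Fin n) (v : Fin n → ℝ) :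
    ∑ k, v k * (Pi.single j 1 : Fin n → ℝ) k = v j := by
  rw [Finset.sum_eq_single j]
  · simp
  · intro k _ hk
    simp [Pi.single_apply, hk]
  · intro h; exact absurd (Finset.mem_univ j) h

lemma bform_eps_right (n : ℕ) (x : F n) (i : ℕ) (h1 : 1 ≤ i) (h2 : i ≤ n) :
    bform n x (eps n i) = x.1 ⟨i - 1, by omega⟩ := by
  unfold bform eps
  rw [dif_pos ⟨h1, h2⟩]
  exact sum_single_mul n _ x.1

lemma bform_eps_eps (n i : ℕ) (h1 : 1 ≤ i) (h2 : i ≤ n) :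
    bform n (eps n i) (eps n i) = 1 := by
  rw [bform_eps_right n _ i h1 h2]
  unfold eps
  rw [dif_pos ⟨h1, h2⟩]
  simp

/-- `π^{C∨} = π^D`: the linear map with `ε_1 ↦ c − ε_1`, `ε_i ↦ ε_i` (`i ≥ 2`), `c ↦ c`. -/
def piCMap (n : ℕ) : Module.End ℝ (F n) where
  toFun g := g - bform n g (eps n 1) • ((2:ℝ) • eps n 1 - cvec n)
  map_add' x y := by
    try dsimp only
    rw [bform_add_left, add_smul]; abel
  map_smul' c x := by
    try dsimp only
    simp only [RingHom.id_apply]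
    rw [bform_smul_left, smul_sub c, smul_smul]

@[simp] lemma piCMap_apply (n : ℕ) (g : F n) :
    piCMap n g = g - bform n g (eps n 1) • ((2:ℝ) • eps n 1 - cvec n) := rfl

lemma piCMap_invol (n : ℕ) (g : F n) : piCMap n (piCMap n g) = g := by
  rcases Nat.eq_zero_or_pos n with h0 | hpos
  · subst h0
    have he : eps 0 1 = 0 := by simp [eps]
    simp [piCMap_apply, he, bform]
  · have hE := bform_eps_eps n 1 le_rfl hpos
    have hc : bform n (cvec n) (eps n 1) = 0 := by simp [bform, cvec]
    simp only [piCMap_apply]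
    rw [bform_sub_left, bform_smul_left, bform_sub_left, bform_smul_left, hE, hc]
    rw [sub_sub, ← add_smul]
    have key : bform n g (eps n 1) +
        (bform n g (eps n 1) - bform n g (eps n 1) * (2 * 1 - 0)) = 0 := by ring
    rw [key, zero_smul, sub_zero]

/-- `π^{C∨}` as an invertible endomorphism. -/
def piCU (n : ℕ) : (Module.End ℝ (F n))ˣ where
  val := piCMap n
  inv := piCMap n
  val_inv := by
    apply LinearMap.ext; intro g
    rw [Module.End.mul_apply, Module.End.one_apply]
    exact piCMap_invol n g
  inv_val := by
    apply LinearMap.ext; intro g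
    rw [Module.End.mul_apply, Module.End.one_apply]
    exact piCMap_invol n g

/-- `π^{B∨}`: the linear map with `ε_i ↦ (1/2)c − ε_{n−i+1}` and `c ↦ c`. -/
def piBMap (n : ℕ) : Module.End ℝ (F n) where
  toFun g := (fun i => -(g.1 (Fin.rev i)), g.2 + (1/2) * ∑ i, g.1 i)
  map_add' x y := by
    try dsimp only
    refine Prod.ext ?_ ?_
    · funext i; simp [neg_add]; ring
    · simp [Finset.sum_add_distrib]; ring
  map_smul' c x := by
    try dsimp only
    simp only [RingHom.id_apply]
    refine Prod.ext ?_ ?_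
    · funext i; simp [mul_comm]
    · simp only [Prod.smul_snd, Prod.smul_fst, Pi.smul_apply, smul_eq_mul, Finset.mul_sum,
        mul_add]
      congr 1
      exact Finset.sum_congr rfl fun i _ => by ring

@[simp] lemma piBMap_apply (n : ℕ) (g : F n) :
    piBMap n g = (fun i => -(g.1 (Fin.rev i)), g.2 + (1/2) * ∑ i, g.1 i) := rfl

lemma piBMap_invol (n : ℕ) (g : F n) : piBMap n (piBMap n g) = g := by
  simp only [piBMap_apply]
  refine Prod.ext ?_ ?_
  · funext i; simp
  · have h : ∑ i, -(g.1 (Fin.rev i)) = -∑ i, g.1 i := by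
      rw [← Finset.sum_neg_distrib]
      exact Equiv.sum_comp (Equiv.mk Fin.rev Fin.rev Fin.rev_rev Fin.rev_rev) (fun i => -(g.1 i))
    dsimp only
    rw [h]
    ring

/-- `π^{B∨}` as an invertible endomorphism. -/
def piBU (n : ℕ) : (Module.End ℝ (F n))ˣ where
  val := piBMap n
  inv := piBMap n
  val_inv := by
    apply LinearMap.ext; intro g
    rw [Module.End.mul_apply, Module.End.one_apply]
    exact piBMap_invol n g
  inv_val := by
    apply LinearMap.ext; intro g
    rw [Module.End.mul_apply, Module.End.one_apply]
    exact piBMap_invol n g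

/-- The affine root `a_0^{C∨} = −(ε_1 + ε_2) + c` of Ram–Yip type `C_n^∨`. -/
def a0C (n : ℕ) : F n := -(eps n 1 + eps n 2) + cvec n

/-- The reflection `s_0^{C∨} = s_{a_0^{C∨}}`. -/
def s0C (n : ℕ) : (Module.End ℝ (F n))ˣ := reflE n (a0C n)

/-- The extended affine Weyl group of Ram–Yip type `C_n^∨`:
`W^{C∨,RY} = ⟨s_0^{C∨}, s_1, …, s_n, π^{C∨}⟩`. -/
def WCRY (n : ℕ) : Subgroup (Module.End ℝ (F n))ˣ :=
  Subgroup.closure ({s0C n, piCU n} ∪ sgen n '' Set.Icc 1 n)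

/-- The extended affine Weyl group of Ram–Yip type `B_n^∨`:
`W^{B∨,RY} = ⟨s_0, s_1, …, s_n, π^{B∨}⟩`. -/
def WBRY (n : ℕ) : Subgroup (Module.End ℝ (F n))ˣ :=
  Subgroup.closure (insert (piBU n) (sgen n '' Set.Icc 0 n))

/-- The subgroup generated by `W_0` together with all the translations `t(μ)`, `μ ∈ P_{B_n}`. -/
def WBtrans (n : ℕ) : Subgroup (Module.End ℝ (F n))ˣ :=
  Subgroup.closure ((sgen n '' Set.Icc 1 n) ∪ (tU n '' PB n))

/-- The defining relators of the extended affine Weyl group of type `(C_n^∨, C_n)`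
on the generators `σ_0, …, σ_n`. -/
def rels (n : ℕ) : Set (FreeGroup (Fin (n + 1))) :=
  { r | (∃ i : Fin (n+1), r = FreeGroup.of i * FreeGroup.of i) ∨
        (∃ i j : Fin (n+1), ((i:ℕ) + 1 < (j:ℕ) ∨ (j:ℕ) + 1 < (i:ℕ)) ∧
          r = FreeGroup.of i * FreeGroup.of j * (FreeGroup.of i)⁻¹ * (FreeGroup.of j)⁻¹) ∨
        (∃ i j : Fin (n+1), 1 ≤ (i:ℕ) ∧ (i:ℕ) ≤ n - 2 ∧ (j:ℕ) = (i:ℕ) + 1 ∧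
          r = FreeGroup.of i * FreeGroup.of j * FreeGroup.of i *
              ((FreeGroup.of j)⁻¹ * (FreeGroup.of i)⁻¹ * (FreeGroup.of j)⁻¹)) ∨
        (∃ i j : Fin (n+1), ((i:ℕ) = 0 ∨ (i:ℕ) = n - 1) ∧ (j:ℕ) = (i:ℕ) + 1 ∧
          r = FreeGroup.of i * FreeGroup.of j * FreeGroup.of i * FreeGroup.of j *
              ((FreeGroup.of i)⁻¹ * (FreeGroup.of j)⁻¹ * (FreeGroup.of i)⁻¹ *
                (FreeGroup.of j)⁻¹)) }

/-!
`W₀` is generated by reflections `s_f` in roots `f ∈ ℝⁿ` with `f` and `f^∨` both integral,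
so it preserves the `c`-coordinate and maps `P_{C_n}` onto itself; as
`s_f t(ν) s_f⁻¹ = t(s_f ν)`, it normalises the translation group `t(P_{C_n})`, whence
`t(P_{C_n}) ⊔ W₀ = t(P_{C_n}) · W₀`. This join is `W`: on one side `s_0 = t(ε_1) s_{2ε_1}`
with `s_{2ε_1}` conjugate in `W₀` to `s_n = s_{2ε_n}`; on the other `t(ε_1) = s_0 s_{2ε_1}`
and `t(ε_{i+1}) = s_i t(ε_i) s_i`. The decomposition is unique because `W₀` preserves the
`c`-coordinate, while `t(μ)` does so only for `μ = 0`.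
-/

/-- `ε_{i+1}`: unlike `eps`, indexed from `0`. -/
def ev (n : ℕ) (i : Fin n) : F n := (Pi.single i 1, 0)

variable {n : ℕ}

lemma eps_succ (i : Fin n) : eps n (i + 1) = ev n i := by
  rw [eps, dif_pos ⟨by omega, i.isLt⟩]
  rfl

lemma bform_comm (x y : F n) : bform n x y = bform n y x := by
  simp only [bform, mul_comm]

lemma bform_ev_right (x : F n) (j : Fin n) : bform n x (ev n j) = x.1 j :=
  sum_single_mul n j x.1

lemma bform_ev_left (j : Fin n) (x : F n) : bform n (ev n j) x = x.1 j := by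
  rw [bform_comm, bform_ev_right]

lemma bform_cvec_left (x : F n) : bform n (cvec n) x = 0 := by
  simp [bform, cvec]

section Reflections

lemma reflMap_cvec (f : F n) : reflMap n f (cvec n) = cvec n := by
  rw [reflMap_apply, bform_cvec_left, mul_zero, zero_smul, sub_zero]

lemma bform_reflMap_left (f x y : F n) :
    bform n (reflMap n f x) y = bform n x (reflMap n f y) := by
  simp only [reflMap_apply, bform_sub_left, bform_smul_left]
  rw [bform_comm x (y - _), bform_sub_left, bform_smul_left, bform_comm f y, bform_comm y x,
    bform_comm f x]
  ring

lemma reflE_val {f : F n} (hf : bform n f f ≠ 0) :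
    (reflE n f : Module.End ℝ (F n)) = reflMap n f := by
  rw [reflE, dif_pos hf]

lemma reflE_inv (f : F n) : (reflE n f)⁻¹ = reflE n f := by
  unfold reflE
  split_ifs
  exacts [Units.ext rfl, inv_one]

lemma reflE_conj {f g : F n} (hf : bform n f f ≠ 0) (hg : bform n g g ≠ 0) :
    reflE n g * reflE n f * (reflE n g)⁻¹ = reflE n (reflMap n g f) := by
  have hff : bform n (reflMap n g f) (reflMap n g f) = bform n f f := by
    rw [bform_reflMap_left, reflMap_invol n g hg]
  have hgf : bform n (reflMap n g f) (reflMap n g f) ≠ 0 := hff ▸ hf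
  refine Units.ext (LinearMap.ext fun x => ?_)
  rw [reflE_inv, Units.val_mul, Units.val_mul, reflE_val hf, reflE_val hg, reflE_val hgf]
  calc reflMap n g (reflMap n f (reflMap n g x))
      = x - ((2 / bform n f f) * bform n (reflMap n g x) f) • reflMap n g f := by
        rw [reflMap_apply n f, map_sub, map_smul, reflMap_invol n g hg]
    _ = reflMap n (reflMap n g f) x := by
        rw [reflMap_apply n (reflMap n g f), hff, bform_reflMap_left]

end Reflections

section Translations

lemma tU_zero : tU n 0 = 1 := Units.ext (tMap_zero n)

lemma tU_add (μ ν : Fin n → ℝ) : tU n (μ + ν) = tU n μ * tU n ν :=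
  Units.ext (tMap_mul n μ ν).symm

lemma tU_inv (μ : Fin n → ℝ) : (tU n μ)⁻¹ = tU n (-μ) := Units.ext rfl

lemma reflE_conj_tU {f : F n} (hf : bform n f f ≠ 0) (ν : Fin n → ℝ) :
    reflE n f * tU n ν * (reflE n f)⁻¹ = tU n (reflMap n f (ν, 0)).1 := by
  refine Units.ext (LinearMap.ext fun x => ?_)
  rw [reflE_inv, Units.val_mul, Units.val_mul, reflE_val hf]
  change reflMap n f (tMap n ν (reflMap n f x)) = tMap n _ x
  rw [tMap_apply, map_sub, map_smul, reflMap_invol n f hf, reflMap_cvec, bform_reflMap_left,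
    tMap_apply]
  rfl

end Translations

section Lattice

def latticePC (n : ℕ) : AddSubgroup (Fin n → ℝ) where
  carrier := PC n
  add_mem' {μ ν} hμ hν i := by
    obtain ⟨a, ha⟩ := hμ i
    obtain ⟨b, hb⟩ := hν i
    exact ⟨a + b, by simp [ha, hb]⟩
  zero_mem' _ := ⟨0, by simp⟩
  neg_mem' {μ} hμ i := by
    obtain ⟨a, ha⟩ := hμ i
    exact ⟨-a, by simp [ha]⟩

lemma single_mem_PC (i : Fin n) : (Pi.single i 1 : Fin n → ℝ) ∈ PC n := fun j =>
  ⟨(Pi.single i 1 : Fin n → ℤ) j, by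
    rw [Pi.single_apply, Pi.single_apply]
    split_ifs <;> simp⟩

lemma latticePC_le {L : AddSubgroup (Fin n → ℝ)}
    (hL : ∀ i, (Pi.single i 1 : Fin n → ℝ) ∈ L) : latticePC n ≤ L := by
  intro μ hμ
  choose m hm using hμ
  have hμ_eq : μ = ∑ i, m i • (Pi.single i 1 : Fin n → ℝ) := by
    ext j
    simp [hm, Pi.single_apply]
  rw [hμ_eq]
  exact sum_mem fun i _ => zsmul_mem (hL i) (m i)

lemma exists_bform_eq_intCast {x y : F n} (hx : x.1 ∈ PC n) (hy : y.1 ∈ PC n) :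
    ∃ m : ℤ, bform n x y = m := by
  choose a ha using hx
  choose b hb using hy
  exact ⟨∑ i, a i * b i, by simp [bform, ha, hb]⟩

def translSubgroup (n : ℕ) : Subgroup (Module.End ℝ (F n))ˣ where
  carrier := tU n '' PC n
  mul_mem' := by
    rintro _ _ ⟨μ, hμ, rfl⟩ ⟨ν, hν, rfl⟩
    exact ⟨μ + ν, (latticePC n).add_mem hμ hν, tU_add μ ν⟩
  one_mem' := ⟨0, (latticePC n).zero_mem, tU_zero⟩
  inv_mem' := by
    rintro _ ⟨μ, hμ, rfl⟩
    exact ⟨-μ, (latticePC n).neg_mem hμ, (tU_inv μ).symm⟩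

lemma translSubgroup_le {H : Subgroup (Module.End ℝ (F n))ˣ}
    (hH : ∀ i, tU n (Pi.single i 1) ∈ H) : translSubgroup n ≤ H := by
  let L : AddSubgroup (Fin n → ℝ) :=
    { carrier := {μ | tU n μ ∈ H}
      add_mem' := fun hμ hν => by
        simpa only [Set.mem_ofPred_eq, tU_add] using H.mul_mem hμ hν
      zero_mem' := by simpa only [Set.mem_ofPred_eq, tU_zero] using H.one_mem
      neg_mem' := fun hμ => by simpa only [Set.mem_ofPred_eq, tU_inv] using H.inv_mem hμ }
  rintro _ ⟨μ, hμ, rfl⟩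
  exact latticePC_le (L := L) hH hμ

end Lattice

section IntegralRoots

lemma mem_normalizer_of_inv_eq_self {G : Type*} [Group G] {N : Subgroup G} {g : G}
    (hg : g⁻¹ = g) (hN : ∀ x ∈ N, g * x * g⁻¹ ∈ N) :
    g ∈ Subgroup.normalizer (N : Set G) := by
  refine Subgroup.mem_normalizer_iff.mpr fun x => ⟨hN x, fun hx => ?_⟩
  have hgg : g * g = 1 := mul_eq_one_iff_eq_inv.mpr hg.symm
  simpa only [← mul_assoc, mul_assoc _ g⁻¹, ← mul_inv_rev, hgg, inv_one, one_mul, mul_one]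
    using hN _ hx

structure IsIntegralRoot (f : F n) : Prop where
  bform_ne_zero : bform n f f ≠ 0
  snd_eq_zero : f.2 = 0
  fst_mem : f.1 ∈ PC n
  coroot_fst_mem : ((2 / bform n f f) • f).1 ∈ PC n

def sndPreserving (n : ℕ) : Subgroup (Module.End ℝ (F n))ˣ where
  carrier := {g | ∀ x, ((g : Module.End ℝ (F n)) x).2 = x.2}
  mul_mem' hg hh x := (hg _).trans (hh x)
  one_mem' _ := rfl
  inv_mem' {g} hg x := by
    rw [← hg, ← Module.End.mul_apply, ← Units.val_mul, mul_inv_cancel, Units.val_one,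
      Module.End.one_apply]

lemma eq_zero_of_tU_mem_sndPreserving {μ : Fin n → ℝ} (h : tU n μ ∈ sndPreserving n) :
    μ = 0 := by
  ext i
  have hi : bform n (ev n i) (μ, 0) = 0 := by simpa [tU, cvec] using h (ev n i)
  rwa [bform_ev_left] at hi

namespace IsIntegralRoot

variable {f : F n}

lemma reflMap_fst_mem (hf : IsIntegralRoot f) {μ : Fin n → ℝ} (hμ : μ ∈ PC n) :
    (reflMap n f (μ, 0)).1 ∈ PC n := by
  obtain ⟨m, hm⟩ := exists_bform_eq_intCast (x := (μ, 0)) hμ hf.coroot_fst_mem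
  have hrefl : (reflMap n f (μ, 0)).1 = μ - m • f.1 := by
    rw [← Int.cast_smul_eq_zsmul ℝ, ← hm, bform_comm, bform_smul_left, bform_comm f (μ, 0)]
    rfl
  rw [hrefl]
  exact (latticePC n).sub_mem hμ ((latticePC n).zsmul_mem hf.fst_mem m)

lemma reflE_mem_normalizer (hf : IsIntegralRoot f) :
    reflE n f ∈ Subgroup.normalizer (translSubgroup n : Set (Module.End ℝ (F n))ˣ) :=
  mem_normalizer_of_inv_eq_self (reflE_inv f) <| by
    rintro _ ⟨μ, hμ, rfl⟩
    rw [reflE_conj_tU hf.bform_ne_zero]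
    exact ⟨_, hf.reflMap_fst_mem hμ, rfl⟩

lemma reflE_mem_sndPreserving (hf : IsIntegralRoot f) : reflE n f ∈ sndPreserving n :=
  fun x => by simp [reflE_val hf.bform_ne_zero, hf.snd_eq_zero]

end IsIntegralRoot

end IntegralRoots

section SimpleRoots

lemma bform_ev_sub_ev (i j : Fin n) (x : F n) :
    bform n (ev n i - ev n j) x = x.1 i - x.1 j := by
  rw [bform_sub_left, bform_ev_left, bform_ev_left]

lemma bform_ev_sub_ev_self {i j : Fin n} (hij : i ≠ j) :
    bform n (ev n i - ev n j) (ev n i - ev n j) = 2 := by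
  rw [bform_ev_sub_ev]
  norm_num [ev, hij, hij.symm]

lemma bform_two_smul_ev_self (i : Fin n) :
    bform n ((2:ℝ) • ev n i) ((2:ℝ) • ev n i) = 4 := by
  rw [bform_smul_left, bform_ev_left]
  norm_num [ev]

lemma isIntegralRoot_ev_sub_ev {i j : Fin n} (hij : i ≠ j) :
    IsIntegralRoot (ev n i - ev n j) := by
  have hf : (ev n i - ev n j).1 ∈ PC n :=
    (latticePC n).sub_mem (single_mem_PC i) (single_mem_PC j)
  refine ⟨by rw [bform_ev_sub_ev_self hij]; norm_num, by simp [ev], hf, ?_⟩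
  rwa [bform_ev_sub_ev_self hij, div_self two_ne_zero, one_smul]

lemma isIntegralRoot_two_smul_ev (i : Fin n) : IsIntegralRoot ((2:ℝ) • ev n i) := by
  have hcoroot : (2 / 4 : ℝ) • (2:ℝ) • ev n i = ev n i := by
    rw [smul_smul]; norm_num
  refine ⟨by rw [bform_two_smul_ev_self]; norm_num, by simp [ev], ?_, ?_⟩
  · have h : Pi.single i 1 + Pi.single i 1 ∈ PC n :=
      (latticePC n).add_mem (single_mem_PC i) (single_mem_PC i)
    simpa [ev, two_smul] using h
  · rw [bform_two_smul_ev_self, hcoroot]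
    exact single_mem_PC i

lemma reflMap_ev_sub_ev_left {i j : Fin n} (hij : i ≠ j) :
    reflMap n (ev n i - ev n j) (ev n i) = ev n j := by
  rw [reflMap_apply, bform_ev_sub_ev_self hij, bform_comm, bform_ev_sub_ev]
  simp [ev, hij.symm]

lemma reflMap_ev_sub_ev_right {i j : Fin n} (hij : i ≠ j) :
    reflMap n (ev n i - ev n j) (ev n j) = ev n i := by
  rw [reflMap_apply, bform_ev_sub_ev_self hij, bform_comm, bform_ev_sub_ev]
  simp [ev, hij]

end SimpleRoots

section Generators

lemma sgen_of_ne_zero {k : ℕ} (hk : k ≠ 0) : sgen n k = reflE n (aRootF n k) := by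
  rw [sgen, if_neg hk]

lemma sgen_zero (m : ℕ) :
    sgen (m + 1) 0 = tU (m + 1) (Pi.single 0 1) * reflE (m + 1) ((2:ℝ) • ev (m + 1) 0) := by
  rw [sgen, if_pos rfl, ← eps_succ (0 : Fin (m + 1))]
  rfl

lemma aRootF_last (m : ℕ) : aRootF (m + 1) (m + 1) = (2:ℝ) • ev (m + 1) (Fin.last m) := by
  rw [aRootF, if_neg m.succ_ne_zero, if_pos rfl, ← eps_succ (Fin.last m)]
  rfl

lemma aRootF_succ {m : ℕ} (i : Fin m) :
    aRootF (m + 1) (i + 1) = ev (m + 1) i.castSucc - ev (m + 1) i.succ := by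
  rw [aRootF, if_neg (by omega), if_neg (by omega), ← eps_succ, ← eps_succ]
  rfl

lemma isIntegralRoot_aRootF {k : ℕ} (hk : k ∈ Set.Icc 1 n) : IsIntegralRoot (aRootF n k) := by
  obtain ⟨hk1, hkn⟩ := hk
  obtain ⟨m, rfl⟩ : ∃ m, n = m + 1 := ⟨n - 1, by omega⟩
  obtain ⟨k, rfl⟩ : ∃ k', k = k' + 1 := ⟨k - 1, by omega⟩
  obtain hk | rfl : k < m ∨ k = m := by omega
  · rw [show k = (⟨k, hk⟩ : Fin m) from rfl, aRootF_succ]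
    exact isIntegralRoot_ev_sub_ev Fin.castSucc_lt_succ.ne
  · rw [aRootF_last]
    exact isIntegralRoot_two_smul_ev _

lemma sgen_mem_W0grp {k : ℕ} (hk : k ∈ Set.Icc 1 n) : sgen n k ∈ W0grp n :=
  Subgroup.subset_closure ⟨k, hk, rfl⟩

lemma sgen_mem_Wgrp {k : ℕ} (hk : k ≤ n) : sgen n k ∈ Wgrp n :=
  Subgroup.subset_closure ⟨k, ⟨k.zero_le, hk⟩, rfl⟩

lemma W0grp_le_Wgrp : W0grp n ≤ Wgrp n :=
  Subgroup.closure_mono (Set.image_mono fun k hk => ⟨k.zero_le, hk.2⟩)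

lemma W0grp_le_normalizer :
    W0grp n ≤ Subgroup.normalizer (translSubgroup n : Set (Module.End ℝ (F n))ˣ) := by
  refine (Subgroup.closure_le _).mpr ?_
  rintro _ ⟨k, hk, rfl⟩
  rw [sgen_of_ne_zero (by have := hk.1; omega)]
  exact (isIntegralRoot_aRootF hk).reflE_mem_normalizer

lemma W0grp_le_sndPreserving : W0grp n ≤ sndPreserving n := by
  refine (Subgroup.closure_le _).mpr ?_
  rintro _ ⟨k, hk, rfl⟩
  rw [sgen_of_ne_zero (by have := hk.1; omega)]
  exact (isIntegralRoot_aRootF hk).reflE_mem_sndPreserving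

end Generators

section Semidirect

variable {m : ℕ}

lemma reflE_two_smul_ev_mem_W0grp (i : Fin (m + 1)) :
    reflE (m + 1) ((2:ℝ) • ev (m + 1) i) ∈ W0grp (m + 1) := by
  induction i using Fin.reverseInduction with
  | last =>
    rw [← aRootF_last, ← sgen_of_ne_zero m.succ_ne_zero]
    exact sgen_mem_W0grp ⟨by omega, le_rfl⟩
  | cast i ih =>
    have hne : i.castSucc ≠ i.succ := Fin.castSucc_lt_succ.ne
    have hs : reflE (m + 1) (ev (m + 1) i.castSucc - ev (m + 1) i.succ) ∈ W0grp (m + 1) := by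
      rw [← aRootF_succ, ← sgen_of_ne_zero (by omega)]
      exact sgen_mem_W0grp ⟨by omega, by omega⟩
    have himage : reflMap (m + 1) (ev (m + 1) i.castSucc - ev (m + 1) i.succ)
        ((2:ℝ) • ev (m + 1) i.succ) = (2:ℝ) • ev (m + 1) i.castSucc := by
      rw [map_smul, reflMap_ev_sub_ev_right hne]
    rw [← himage, ← reflE_conj (isIntegralRoot_two_smul_ev _).bform_ne_zero
      (isIntegralRoot_ev_sub_ev hne).bform_ne_zero]
    exact mul_mem (mul_mem hs ih) (inv_mem hs)

lemma tU_single_mem_Wgrp (i : Fin (m + 1)) : tU (m + 1) (Pi.single i 1) ∈ Wgrp (m + 1) := by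
  induction i using Fin.induction with
  | zero =>
    rw [eq_mul_inv_of_mul_eq (sgen_zero m).symm]
    exact mul_mem (sgen_mem_Wgrp (Nat.zero_le _))
      (inv_mem (W0grp_le_Wgrp (reflE_two_smul_ev_mem_W0grp 0)))
  | succ i ih =>
    have hne : i.castSucc ≠ i.succ := Fin.castSucc_lt_succ.ne
    have hs : reflE (m + 1) (ev (m + 1) i.castSucc - ev (m + 1) i.succ) ∈ Wgrp (m + 1) := by
      rw [← aRootF_succ, ← sgen_of_ne_zero (by omega)]
      exact sgen_mem_Wgrp (by omega)
    have himage : (reflMap (m + 1) (ev (m + 1) i.castSucc - ev (m + 1) i.succ)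
        (Pi.single i.castSucc 1, 0)).1 = Pi.single i.succ 1 :=
      congrArg Prod.fst (reflMap_ev_sub_ev_left hne)
    rw [← himage, ← reflE_conj_tU (isIntegralRoot_ev_sub_ev hne).bform_ne_zero]
    exact mul_mem (mul_mem hs ih) (inv_mem hs)

lemma Wgrp_eq_sup : Wgrp (m + 1) = translSubgroup (m + 1) ⊔ W0grp (m + 1) := by
  refine le_antisymm ((Subgroup.closure_le _).mpr ?_)
    (sup_le (translSubgroup_le tU_single_mem_Wgrp) W0grp_le_Wgrp)
  rintro _ ⟨k, hk, rfl⟩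
  rcases Nat.eq_zero_or_pos k with rfl | hk0
  · rw [sgen_zero]
    exact mul_mem (Subgroup.mem_sup_left ⟨_, single_mem_PC 0, rfl⟩)
      (Subgroup.mem_sup_right (reflE_two_smul_ev_mem_W0grp 0))
  · exact Subgroup.mem_sup_right (sgen_mem_W0grp ⟨hk0, hk.2⟩)

end Semidirect

/-- `W = t(P_{C_n}) ⋊ W_0`: every element of `W` is uniquely `t(μ) ∘ w` with
`μ ∈ P_{C_n}` and `w ∈ W_0`. -/
theorem W_eq_semidirect_product (n : ℕ) (hn : 2 ≤ n) :
    (∀ g : (Module.End ℝ (F n))ˣ,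
      g ∈ Wgrp n ↔ ∃ μ ∈ PC n, ∃ w ∈ W0grp n, g = tU n μ * w) ∧
    (∀ μ ∈ PC n, ∀ ν ∈ PC n, ∀ w ∈ W0grp n, ∀ w' ∈ W0grp n,
      tU n μ * w = tU n ν * w' → μ = ν ∧ w = w') := by
  obtain ⟨m, rfl⟩ : ∃ m, n = m + 1 := ⟨n - 1, by omega⟩
  refine ⟨fun g => ?_, fun μ _ ν _ w hw w' hw' h => ?_⟩
  · rw [← SetLike.mem_coe, Wgrp_eq_sup,
      Subgroup.coe_mul_of_right_le_normalizer_left _ _ W0grp_le_normalizer, Set.mem_mul]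
    constructor
    · rintro ⟨_, ⟨μ, hμ, rfl⟩, w, hw, rfl⟩
      exact ⟨μ, hμ, w, hw, rfl⟩
    · rintro ⟨μ, hμ, w, hw, rfl⟩
      exact ⟨_, ⟨μ, hμ, rfl⟩, w, hw, rfl⟩
  · have hdiff : tU (m + 1) (μ - ν) = w' * w⁻¹ := by
      rw [sub_eq_neg_add, tU_add, ← tU_inv, inv_mul_eq_iff_eq_mul, ← mul_assoc, ← h,
        mul_inv_cancel_right]
    have hμν : μ - ν = 0 := eq_zero_of_tU_mem_sndPreserving
      (W0grp_le_sndPreserving (hdiff ▸ mul_mem hw' (inv_mem hw)))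
    obtain rfl := sub_eq_zero.mp hμν
    exact ⟨rfl, mul_left_cancel h⟩

end CvC
end
end

section
/- Define the set of positive affine roots S⁺ = {α + rc ∈ S : α ∈ ℝⁿ, r > 0} ∪ {α ∈ S ∩ ℝⁿ : α ∈ R̃₊}. Then S is the disjoint union of S⁺ and −S⁺, and S⁺ consists exactly of those elements of S expressible as Σ_{i=0}^n c_i a_i with all coefficients c_i nonnegative rationals (and such an expression can always be chosen with every c_i a nonnegative half-integer). -/
noncomputable section

namespace CvC

/-! The simple affine roots form a basis of `F`, with `c = a_0 + 2 (a_1 + ⋯ + a_{n-1}) + a_n` and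
`ε_i = a_i + ⋯ + a_{n-1} + a_n / 2`. Every positive affine root can be written as
`a ε_i + b ε_j + (T/2) c` with `i ≤ j` and `T, T + a, T + a + b ≥ 0`, and reading off its
coordinates in this basis shows that they are nonnegative half-integers. Conversely, an affine root
with nonnegative coordinates `q_k` has level `q_0 ≥ 0`; at level zero it lies in `±R̃₊`, and
pairing with `ρ`, which is nonnegative on `a_1, …, a_n` and positive on `R̃₊`, rules out `-R̃₊`.
The same two invariants, level and `ρ`, separate `S⁺` from `-S⁺`. -/

section

open Finset

variable {n : ℕ}

@[simp] lemma eps_snd (i : ℕ) : (eps n i).2 = 0 := by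
  unfold eps; split <;> rfl

lemma eps_fst_apply (i : ℕ) (l : Fin n) : (eps n i).1 l = if (l : ℕ) + 1 = i then 1 else 0 := by
  unfold eps
  split_ifs with h hl hl
  · simp only [Pi.single_apply, Fin.ext_iff, ite_eq_left_iff, zero_ne_one, imp_false,
      Decidable.not_not]
    omega
  · simp only [Pi.single_apply, Fin.ext_iff, ite_eq_right_iff, one_ne_zero, imp_false]
    omega
  · omega
  · rfl

@[simp] lemma cvec_fst : (cvec n).1 = 0 := rfl

@[simp] lemma cvec_snd : (cvec n).2 = 1 := rfl

lemma aRootF_snd (k : ℕ) : (aRootF n k).2 = if k = 0 then 1 else 0 := by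
  unfold aRootF; split_ifs <;> simp

lemma aRootF_fst_apply (k : ℕ) (l : Fin n) :
    (aRootF n k).1 l =
      (if k = (l : ℕ) + 1 then (if k = n then 2 else 1) else 0) +
      (if k = (l : ℕ) then (if k = 0 then -2 else -1) else 0) := by
  have := l.isLt
  unfold aRootF
  split_ifs <;>
  simp only [Prod.fst_add, Prod.fst_sub, Prod.smul_fst, Pi.add_apply, Pi.sub_apply,
    Pi.smul_apply, smul_eq_mul, cvec_fst, Pi.zero_apply, eps_fst_apply]
  all_goals split_ifs <;> first | (exfalso; omega) | norm_num

def partialSum (n k : ℕ) : (Fin n → ℝ) →ₗ[ℝ] ℝ := ∑ l : Fin n with l.val < k, LinearMap.proj l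

lemma partialSum_apply (k : ℕ) (v : Fin n → ℝ) :
    partialSum n k v = ∑ l : Fin n with l.val < k, v l := by
  simp [partialSum]

lemma partialSum_zero (v : Fin n → ℝ) : partialSum n 0 v = 0 := by
  simp [partialSum_apply]

lemma partialSum_succ {k : ℕ} (hk : k < n) (v : Fin n → ℝ) :
    partialSum n (k + 1) v = partialSum n k v + v ⟨k, hk⟩ := by
  have : (univ.filter fun l : Fin n => l.val < k + 1) =
      insert ⟨k, hk⟩ (univ.filter fun l : Fin n => l.val < k) := by
    ext l
    simp only [Order.lt_add_one_iff, mem_filter, mem_univ, true_and, mem_insert, Fin.ext_iff]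
    omega
  rw [partialSum_apply, partialSum_apply, this, sum_insert (by simp), add_comm]

lemma partialSum_eps {i : ℕ} (hi : 1 ≤ i) (hin : i ≤ n) (k : ℕ) :
    partialSum n k (eps n i).1 = if i ≤ k then 1 else 0 := by
  have := bform_eps_right n (fun l : Fin n => if l.val < k then 1 else 0, 0) i hi hin
  simp only [bform, ite_mul, one_mul, zero_mul, ← sum_filter] at this
  rw [partialSum_apply, this]
  split_ifs <;> first | rfl | omega

def simpleRootCoeff (n k : ℕ) : F n →ₗ[ℝ] ℝ :=
  if k = 0 then LinearMap.snd ℝ _ _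
  else if k = n then LinearMap.snd ℝ _ _ + (1 / 2 : ℝ) • (partialSum n n ∘ₗ LinearMap.fst ℝ _ _)
  else (2 : ℝ) • LinearMap.snd ℝ _ _ + partialSum n k ∘ₗ LinearMap.fst ℝ _ _

lemma simpleRootCoeff_zero_apply (x : F n) : simpleRootCoeff n 0 x = x.2 := by
  simp [simpleRootCoeff]

lemma simpleRootCoeff_self_apply (hn : n ≠ 0) (x : F n) :
    simpleRootCoeff n n x = x.2 + partialSum n n x.1 / 2 := by
  simp only [simpleRootCoeff, hn, ↓reduceIte, LinearMap.add_apply, LinearMap.snd_apply,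
    LinearMap.smul_apply, LinearMap.comp_apply, LinearMap.fst_apply, smul_eq_mul]
  ring

lemma simpleRootCoeff_apply_of_ne {k : ℕ} (hk0 : k ≠ 0) (hkn : k ≠ n) (x : F n) :
    simpleRootCoeff n k x = 2 * x.2 + partialSum n k x.1 := by
  simp [simpleRootCoeff, hk0, hkn]

lemma snd_sum_smul_aRootF (c : ℕ → ℝ) : (∑ k ∈ range (n + 1), c k • aRootF n k).2 = c 0 := by
  rw [Prod.snd_sum, sum_eq_single_of_mem 0 (by simp)]
  · simp [aRootF_snd]
  · intro k _ hk
    simp [aRootF_snd, hk]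

theorem sum_simpleRootCoeff_smul_aRootF (x : F n) :
    ∑ k ∈ range (n + 1), simpleRootCoeff n k x • aRootF n k = x := by
  refine Prod.ext ?_ (by rw [snd_sum_smul_aRootF, simpleRootCoeff_zero_apply])
  funext l
  have hl := l.isLt
  simp only [Prod.fst_sum, Finset.sum_apply, Prod.smul_fst, Pi.smul_apply, smul_eq_mul]
  -- only `a_l` and `a_{l+1}` have a nonzero `l`-th coordinate
  have hsupp : {l.val, l.val + 1} ⊆ range (n + 1) := by
    intro k
    simp only [mem_insert, mem_singleton, mem_range]
    omega
  rw [← sum_subset hsupp, sum_pair (by omega)]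
  · simp only [aRootF_fst_apply, ↓reduceIte, if_neg (Nat.succ_ne_self _),
      if_neg (Nat.succ_ne_self _).symm, zero_add, add_zero]
    have hsucc := partialSum_succ hl x.1
    rw [Fin.eta] at hsucc
    generalize (l : ℕ) = j at hsucc hl ⊢
    by_cases htop : j + 1 = n
    · subst htop
      rw [simpleRootCoeff_self_apply j.succ_ne_zero, hsucc, if_pos rfl]
      rcases j with _ | j
      · rw [simpleRootCoeff_zero_apply, partialSum_zero, if_pos rfl]; ring
      · rw [simpleRootCoeff_apply_of_ne j.succ_ne_zero (by omega), if_neg j.succ_ne_zero]; ring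
    · rw [simpleRootCoeff_apply_of_ne j.succ_ne_zero htop, hsucc, if_neg htop]
      rcases j with _ | j
      · rw [simpleRootCoeff_zero_apply, partialSum_zero, if_pos rfl]; ring
      · rw [simpleRootCoeff_apply_of_ne j.succ_ne_zero (by omega), if_neg j.succ_ne_zero]; ring
  · intro k _ hk
    simp only [mem_insert, mem_singleton, not_or] at hk
    simp [aRootF_fst_apply, hk.1, hk.2]

lemma simpleRootCoeff_cvec (k : ℕ) :
    simpleRootCoeff n k (cvec n) = if k = 0 ∨ k = n then 1 else 2 := by
  unfold simpleRootCoeff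
  split_ifs <;> simp_all

lemma simpleRootCoeff_eps {i : ℕ} (hi : 1 ≤ i) (hin : i ≤ n) (k : ℕ) :
    simpleRootCoeff n k (eps n i) =
      if k = 0 then 0 else if k = n then 1 / 2 else if i ≤ k then 1 else 0 := by
  by_cases hk0 : k = 0
  · simp [hk0, simpleRootCoeff_zero_apply]
  by_cases hkn : k = n
  · subst hkn
    simp [hk0, simpleRootCoeff_self_apply hk0, partialSum_eps hi hin, hin]
  · simp [hk0, hkn, simpleRootCoeff_apply_of_ne hk0 hkn, partialSum_eps hi hin]

def IsPositiveShape (n : ℕ) (x : F n) : Prop :=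
  ∃ i j : ℕ, ∃ a b T : ℤ, 1 ≤ i ∧ i ≤ j ∧ j ≤ n ∧ 0 ≤ T ∧ 0 ≤ T + a ∧ 0 ≤ T + a + b ∧
    x = (a : ℝ) • eps n i + (b : ℝ) • eps n j + ((T : ℝ) / 2) • cvec n

lemma IsPositiveShape.exists_simpleRootCoeff_eq_half {x : F n} (hx : IsPositiveShape n x)
    (k : ℕ) : ∃ m : ℕ, simpleRootCoeff n k x = m / 2 := by
  obtain ⟨i, j, a, b, T, hi, hij, hj, hT, hTa, hTab, hx⟩ := hx
  suffices ∃ z : ℤ, 0 ≤ z ∧ simpleRootCoeff n k x = z / 2 by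
    obtain ⟨z, hz, h⟩ := this
    lift z to ℕ using hz
    exact ⟨z, by rw [h, Int.cast_natCast]⟩
  rw [hx]
  refine ⟨if k = 0 then T else if k = n then T + a + b
    else 2 * T + (if i ≤ k then 2 * a else 0) + (if j ≤ k then 2 * b else 0), ?_, ?_⟩
  · split_ifs <;> omega
  · simp only [map_add, map_smul, simpleRootCoeff_eps hi (hij.trans hj),
      simpleRootCoeff_eps (hi.trans hij) hj, simpleRootCoeff_cvec, smul_eq_mul]
    split_ifs <;> first | omega | (push_cast; ring)

lemma isPositiveShape_of_mem_Sset_of_snd_pos {x : F n} (hx : x ∈ Sset n) (hpos : 0 < x.2) :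
    IsPositiveShape n x := by
  rcases hx with ((((⟨i, hi, hin, r, rfl | rfl⟩ | ⟨i, hi, hin, r, rfl | rfl⟩) |
    ⟨i, hi, hin, r, rfl | rfl⟩) | ⟨i, hi, hin, r, rfl | rfl⟩) |
    ⟨i, j, hi, hij, hjn, r, rfl | rfl | rfl | rfl⟩) <;>
  simp only [Prod.snd_add, Prod.snd_sub, Prod.snd_neg, Prod.smul_snd, eps_snd, cvec_snd,
    smul_eq_mul, mul_one, mul_zero, neg_zero, zero_add, add_zero, sub_self, Int.cast_pos] at hpos
  · exact ⟨i, i, 1, 0, 2 * r, hi, le_rfl, hin, by omega, by omega, by omega, by push_cast; module⟩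
  · exact ⟨i, i, -1, 0, 2 * r, hi, le_rfl, hin, by omega, by omega, by omega, by push_cast; module⟩
  · exact ⟨i, i, 2, 0, 4 * r, hi, le_rfl, hin, by omega, by omega, by omega, by push_cast; module⟩
  · exact ⟨i, i, -2, 0, 4 * r, hi, le_rfl, hin, by omega, by omega, by omega, by push_cast; module⟩
  · have hr : -1 < r := by exact_mod_cast (by linarith : (-1 : ℝ) < r)
    exact ⟨i, i, 1, 0, 2 * r + 1, hi, le_rfl, hin, by omega, by omega, by omega,
      by push_cast; module⟩
  · have hr : -1 < r := by exact_mod_cast (by linarith : (-1 : ℝ) < r)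
    exact ⟨i, i, -1, 0, 2 * r + 1, hi, le_rfl, hin, by omega, by omega, by omega,
      by push_cast; module⟩
  · exact ⟨i, i, 2, 0, 4 * r + 2, hi, le_rfl, hin, by omega, by omega, by omega,
      by push_cast; module⟩
  · exact ⟨i, i, -2, 0, 4 * r + 2, hi, le_rfl, hin, by omega, by omega, by omega,
      by push_cast; module⟩
  · exact ⟨i, j, 1, 1, 2 * r, hi, hij.le, hjn, by omega, by omega, by omega, by push_cast; module⟩
  · exact ⟨i, j, 1, -1, 2 * r, hi, hij.le, hjn, by omega, by omega, by omega, by push_cast; module⟩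
  · exact ⟨i, j, -1, 1, 2 * r, hi, hij.le, hjn, by omega, by omega, by omega, by push_cast; module⟩
  · exact ⟨i, j, -1, -1, 2 * r, hi, hij.le, hjn, by omega, by omega, by omega,
      by push_cast; module⟩

lemma isPositiveShape_of_mem_Rtplus {x : F n} (hx : x ∈ Rtplus n) : IsPositiveShape n x := by
  rcases hx with ⟨i, hi, hin, rfl | rfl⟩ | ⟨i, j, hi, hij, hjn, rfl | rfl⟩
  · exact ⟨i, i, 1, 0, 0, hi, le_rfl, hin, le_rfl, by omega, by omega, by push_cast; module⟩
  · exact ⟨i, i, 2, 0, 0, hi, le_rfl, hin, le_rfl, by omega, by omega, by push_cast; module⟩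
  · exact ⟨i, j, 1, 1, 0, hi, hij.le, hjn, le_rfl, by omega, by omega, by push_cast; module⟩
  · exact ⟨i, j, 1, -1, 0, hi, hij.le, hjn, le_rfl, by omega, by omega, by push_cast; module⟩

theorem exists_halfNat_expansion_of_mem_Splus {x : F n} (hx : x ∈ Splus n) :
    ∃ m : ℕ → ℕ, x = ∑ k ∈ range (n + 1), ((m k : ℝ) / 2) • aRootF n k := by
  have hshape : IsPositiveShape n x :=
    hx.elim (fun h => isPositiveShape_of_mem_Sset_of_snd_pos h.1 h.2)
      (fun h => isPositiveShape_of_mem_Rtplus h.2)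
  choose m hm using hshape.exists_simpleRootCoeff_eq_half
  exact ⟨m, by simp_rw [← hm]; exact (sum_simpleRootCoeff_smul_aRootF x).symm⟩
lemma neg_mem_O1 {x : F n} (hx : x ∈ O1 n) : -x ∈ O1 n := by
  obtain ⟨i, hi, hin, r, rfl | rfl⟩ := hx
  exacts [⟨i, hi, hin, -r, .inr (by push_cast; module)⟩,
    ⟨i, hi, hin, -r, .inl (by push_cast; module)⟩]

lemma neg_mem_O2 {x : F n} (hx : x ∈ O2 n) : -x ∈ O2 n := by
  obtain ⟨i, hi, hin, r, rfl | rfl⟩ := hx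
  exacts [⟨i, hi, hin, -r, .inr (by push_cast; module)⟩,
    ⟨i, hi, hin, -r, .inl (by push_cast; module)⟩]

lemma neg_mem_O3 {x : F n} (hx : x ∈ O3 n) : -x ∈ O3 n := by
  obtain ⟨i, hi, hin, r, rfl | rfl⟩ := hx
  exacts [⟨i, hi, hin, -1 - r, .inr (by push_cast; module)⟩,
    ⟨i, hi, hin, -1 - r, .inl (by push_cast; module)⟩]

lemma neg_mem_O4 {x : F n} (hx : x ∈ O4 n) : -x ∈ O4 n := by
  obtain ⟨i, hi, hin, r, rfl | rfl⟩ := hx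
  exacts [⟨i, hi, hin, -1 - r, .inr (by push_cast; module)⟩,
    ⟨i, hi, hin, -1 - r, .inl (by push_cast; module)⟩]

lemma neg_mem_O5 {x : F n} (hx : x ∈ O5 n) : -x ∈ O5 n := by
  obtain ⟨i, j, hi, hij, hjn, r, rfl | rfl | rfl | rfl⟩ := hx
  exacts [⟨i, j, hi, hij, hjn, -r, .inr (.inr (.inr (by push_cast; module)))⟩,
    ⟨i, j, hi, hij, hjn, -r, .inr (.inr (.inl (by push_cast; module)))⟩,
    ⟨i, j, hi, hij, hjn, -r, .inr (.inl (by push_cast; module))⟩,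
    ⟨i, j, hi, hij, hjn, -r, .inl (by push_cast; module)⟩]

lemma neg_mem_Sset {x : F n} (hx : x ∈ Sset n) : -x ∈ Sset n := by
  rcases hx with ((((h | h) | h) | h) | h)
  exacts [.inl (.inl (.inl (.inl (neg_mem_O1 h)))), .inl (.inl (.inl (.inr (neg_mem_O2 h)))),
    .inl (.inl (.inr (neg_mem_O3 h))), .inl (.inr (neg_mem_O4 h)), .inr (neg_mem_O5 h)]

lemma Splus_subset_Sset : Splus n ⊆ Sset n := fun _ h => h.elim (·.1) (·.1)

lemma mem_Rtplus_or_neg_mem_Rtplus {x : F n} (hx : x ∈ Sset n) (h0 : x.2 = 0) :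
    x ∈ Rtplus n ∨ -x ∈ Rtplus n := by
  rcases hx with ((((⟨i, hi, hin, r, rfl | rfl⟩ | ⟨i, hi, hin, r, rfl | rfl⟩) |
    ⟨i, hi, hin, r, rfl | rfl⟩) | ⟨i, hi, hin, r, rfl | rfl⟩) |
    ⟨i, j, hi, hij, hjn, r, rfl | rfl | rfl | rfl⟩) <;>
  simp only [Prod.snd_add, Prod.snd_sub, Prod.snd_neg, Prod.smul_snd, eps_snd, cvec_snd,
    smul_eq_mul, mul_one, mul_zero, neg_zero, zero_add, add_zero, sub_self, Int.cast_eq_zero] at h0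
  · exact .inl (.inl ⟨i, hi, hin, .inl (by simp [h0])⟩)
  · exact .inr (.inl ⟨i, hi, hin, .inl (by simp [h0])⟩)
  · exact .inl (.inl ⟨i, hi, hin, .inr (by simp [h0])⟩)
  · exact .inr (.inl ⟨i, hi, hin, .inr (by simp [h0])⟩)
  iterate 2
    · have hodd : 2 * r + 1 = 0 := Int.cast_eq_zero (α := ℝ) |>.mp (by push_cast; linarith)
      omega
  iterate 2
    · omega
  · exact .inl (.inr ⟨i, j, hi, hij, hjn, .inl (by simp [h0])⟩)
  · exact .inl (.inr ⟨i, j, hi, hij, hjn, .inr (by simp [h0])⟩)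
  · exact .inr (.inr ⟨i, j, hi, hij, hjn, .inr (by simp [h0]; abel)⟩)
  · exact .inr (.inr ⟨i, j, hi, hij, hjn, .inl (by simp [h0]; abel)⟩)

/-- Pairing with `ρ = n ε_1 + (n - 1) ε_2 + ⋯ + ε_n`, the half sum of the positive roots of `C_n`. -/
def rhoPairing (n : ℕ) : F n →ₗ[ℝ] ℝ :=
  ∑ l : Fin n, ((n : ℝ) - l) • (LinearMap.proj l ∘ₗ LinearMap.fst ℝ _ _)

lemma rhoPairing_apply (x : F n) : rhoPairing n x = ∑ l : Fin n, ((n : ℝ) - l) * x.1 l := by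
  simp [rhoPairing]

lemma rhoPairing_eps {i : ℕ} (hi : 1 ≤ i) (hin : i ≤ n) : rhoPairing n (eps n i) = n + 1 - i := by
  have := bform_eps_right n (fun l : Fin n => (n : ℝ) - l, 0) i hi hin
  simp only [bform] at this
  rw [rhoPairing_apply, this]
  push_cast [Nat.cast_sub hi]
  ring

lemma rhoPairing_aRootF_nonneg {k : ℕ} (hk : 1 ≤ k) (hkn : k ≤ n) :
    0 ≤ rhoPairing n (aRootF n k) := by
  unfold aRootF
  rw [if_neg (by omega)]
  split_ifs with h
  · rw [map_smul, rhoPairing_eps (by omega) le_rfl, smul_eq_mul]; norm_num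
  · rw [map_sub, rhoPairing_eps hk hkn, rhoPairing_eps (by omega) (by omega)]; push_cast; linarith

lemma rhoPairing_pos_of_mem_Rtplus {x : F n} (hx : x ∈ Rtplus n) : 0 < rhoPairing n x := by
  rcases hx with ⟨i, hi, hin, rfl | rfl⟩ | ⟨i, j, hi, hij, hjn, rfl | rfl⟩
  · rw [rhoPairing_eps hi hin]
    have : (i : ℝ) ≤ n := mod_cast hin
    linarith
  · rw [map_smul, rhoPairing_eps hi hin, smul_eq_mul]
    have : (i : ℝ) ≤ n := mod_cast hin
    linarith
  · rw [map_add, rhoPairing_eps hi (by omega), rhoPairing_eps (by omega) hjn]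
    have : (i : ℝ) < j := mod_cast hij
    have : (j : ℝ) ≤ n := mod_cast hjn
    linarith
  · rw [map_sub, rhoPairing_eps hi (by omega), rhoPairing_eps (by omega) hjn]
    have : (i : ℝ) < j := mod_cast hij
    linarith

lemma snd_eq_zero_of_mem_Rtplus {x : F n} (hx : x ∈ Rtplus n) : x.2 = 0 := by
  rcases hx with ⟨i, -, -, rfl | rfl⟩ | ⟨i, j, -, -, -, rfl | rfl⟩ <;> simp

lemma snd_pos_or_rhoPairing_pos_of_mem_Splus {x : F n} (hx : x ∈ Splus n) :
    0 < x.2 ∨ x.2 = 0 ∧ 0 < rhoPairing n x := by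
  rcases hx with ⟨-, hpos⟩ | ⟨-, hR⟩
  exacts [.inl hpos, .inr ⟨snd_eq_zero_of_mem_Rtplus hR, rhoPairing_pos_of_mem_Rtplus hR⟩]

lemma Sset_eq_Splus_union_neg : Sset n = Splus n ∪ (fun x => -x) '' Splus n := by
  ext x
  constructor
  · intro hx
    rcases lt_trichotomy x.2 0 with hneg | hzero | hpos
    · exact .inr ⟨-x, .inl ⟨neg_mem_Sset hx, by simpa using hneg⟩, neg_neg x⟩
    · rcases mem_Rtplus_or_neg_mem_Rtplus hx hzero with hR | hR
      · exact .inl (.inr ⟨hx, hR⟩)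
      · exact .inr ⟨-x, .inr ⟨neg_mem_Sset hx, hR⟩, neg_neg x⟩
    · exact .inl (.inl ⟨hx, hpos⟩)
  · rintro (hx | ⟨y, hy, rfl⟩)
    exacts [Splus_subset_Sset hx, neg_mem_Sset (Splus_subset_Sset hy)]

lemma disjoint_Splus_neg : Disjoint (Splus n) ((fun x => -x) '' Splus n) := by
  rw [Set.disjoint_left]
  rintro _ hx ⟨y, hy, rfl⟩
  have hx := snd_pos_or_rhoPairing_pos_of_mem_Splus hx
  have hy := snd_pos_or_rhoPairing_pos_of_mem_Splus hy
  simp only [Prod.snd_neg, map_neg, neg_pos, neg_eq_zero] at hx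
  rcases hx with hx | ⟨hx, hx'⟩ <;> rcases hy with hy | ⟨hy, hy'⟩ <;> linarith

lemma mem_Splus_of_eq_sum_nonneg {x : F n} (hx : x ∈ Sset n) {q : ℕ → ℝ} (hq : ∀ k, 0 ≤ q k)
    (hsum : x = ∑ k ∈ range (n + 1), q k • aRootF n k) : x ∈ Splus n := by
  have hsnd : x.2 = q 0 := hsum ▸ snd_sum_smul_aRootF q
  rcases (hq 0).lt_or_eq with hpos | hzero
  · exact .inl ⟨hx, hsnd ▸ hpos⟩
  rcases mem_Rtplus_or_neg_mem_Rtplus hx (hsnd.trans hzero.symm) with hR | hR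
  · exact .inr ⟨hx, hR⟩
  have hρ : 0 ≤ rhoPairing n x := by
    rw [hsum, map_sum]
    refine sum_nonneg fun k hk => ?_
    rcases Nat.eq_zero_or_pos k with rfl | hk0
    · simp [← hzero]
    · rw [map_smul, smul_eq_mul]
      exact mul_nonneg (hq k) (rhoPairing_aRootF_nonneg hk0 (by simpa [Nat.lt_succ_iff] using hk))
  have := rhoPairing_pos_of_mem_Rtplus hR
  rw [map_neg] at this
  linarith

end

theorem positive_affine_roots_general (n : ℕ) :
    (Sset n = Splus n ∪ (fun x => -x) '' Splus n) ∧
    Disjoint (Splus n) ((fun x => -x) '' Splus n) ∧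
    (∀ x ∈ Sset n, (x ∈ Splus n ↔ ∃ q : ℕ → ℚ, (∀ k, 0 ≤ q k) ∧
        x = ∑ k ∈ Finset.range (n+1), (q k : ℝ) • aRootF n k)) ∧
    (∀ x ∈ Splus n, ∃ m : ℕ → ℕ,
        x = ∑ k ∈ Finset.range (n+1), ((m k : ℝ) / 2) • aRootF n k) := by
  refine ⟨Sset_eq_Splus_union_neg, disjoint_Splus_neg, fun x hx => ⟨fun hxp => ?_, ?_⟩,
    fun x hx => exists_halfNat_expansion_of_mem_Splus hx⟩
  · obtain ⟨m, hm⟩ := exists_halfNat_expansion_of_mem_Splus hxp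
    exact ⟨fun k => m k / 2, fun k => by positivity, by simpa using hm⟩
  · rintro ⟨q, hq, hsum⟩
    exact mem_Splus_of_eq_sum_nonneg hx (fun k => mod_cast hq k) hsum

/-- `S = S⁺ ⊔ (−S⁺)`, and `S⁺` consists exactly of the elements of `S` that are
nonnegative rational combinations of `a_0, …, a_n` (such an expression can be chosen with all
coefficients nonnegative half-integers). -/
theorem positive_affine_roots (n : ℕ) (hn : 2 ≤ n) :
    (Sset n = Splus n ∪ (fun x => -x) '' Splus n) ∧
    Disjoint (Splus n) ((fun x => -x) '' Splus n) ∧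
    (∀ x ∈ Sset n, (x ∈ Splus n ↔ ∃ q : ℕ → ℚ, (∀ k, 0 ≤ q k) ∧
        x = ∑ k ∈ Finset.range (n+1), (q k : ℝ) • aRootF n k)) ∧
    (∀ x ∈ Splus n, ∃ m : ℕ → ℕ,
        x = ∑ k ∈ Finset.range (n+1), ((m k : ℝ) / 2) • aRootF n k) :=
  positive_affine_roots_general n

end CvC
end
end
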